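/- arXiv:1112.0769 — 3 statements merged into one kernel-verified Lean document; each statement's English description precedes it below -/
import Mathlib

section
/- Let λ be a partition with conjugate λ'. Then for all nonnegative integers a and b, λ'₁ + λ'₂ + ⋯ + λ'_a ≤ a·b + (λ_{b+1} + λ_{b+2} + ⋯), i.e. the number of boxes in the first a columns of λ is at most a·b plus the number of boxes of λ lying strictly below row b. -/
/-!
Count the cells of `μ` lying in the first `a` columns, splitting them by whether their row
index is below `b`. Those in the first `b` rows fit in the `b × a` rectangle; the others lie
strictly below row `b`, of which there are `λ_{b+1} + λ_{b+2} + ⋯` in all.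
-/

open Finset

namespace YoungDiagram

theorem sum_rowLen_eq_card_filter (μ : YoungDiagram) (s : Finset ℕ) :
    ∑ i ∈ s, μ.rowLen i = #{c ∈ μ.cells | c.1 ∈ s} := by
  rw [card_eq_sum_card_fiberwise (f := Prod.fst) (s := {c ∈ μ.cells | c.1 ∈ s}) (t := s)
    fun c hc => (mem_filter.1 hc).2]
  refine sum_congr rfl fun i hi => ?_
  rw [rowLen_eq_card, row, filter_filter]
  congr 1
  exact filter_congr fun c _ => ⟨fun h => ⟨h ▸ hi, h⟩, And.right⟩

theorem sum_colLen_eq_card_filter (μ : YoungDiagram) (s : Finset ℕ) :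
    ∑ j ∈ s, μ.colLen j = #{c ∈ μ.cells | c.2 ∈ s} := by
  rw [card_eq_sum_card_fiberwise (f := Prod.snd) (s := {c ∈ μ.cells | c.2 ∈ s}) (t := s)
    fun c hc => (mem_filter.1 hc).2]
  refine sum_congr rfl fun j hj => ?_
  rw [colLen_eq_card, col, filter_filter]
  congr 1
  exact filter_congr fun c _ => ⟨fun h => ⟨h ▸ hj, h⟩, And.right⟩

theorem fst_lt_colLen_zero {μ : YoungDiagram} {c : ℕ × ℕ} (hc : c ∈ μ) :
    c.1 < μ.colLen 0 :=
  mem_iff_lt_colLen.1 (μ.up_left_mem le_rfl (Nat.zero_le _) hc)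

theorem sum_rowLen_Ico_colLen_zero (μ : YoungDiagram) (b : ℕ) :
    ∑ i ∈ Ico b (μ.colLen 0), μ.rowLen i = #{c ∈ μ.cells | b ≤ c.1} := by
  rw [sum_rowLen_eq_card_filter]
  congr 1
  exact filter_congr fun c hc => by
    simp only [mem_Ico, fst_lt_colLen_zero ((mem_cells c).1 hc), and_true]

end YoungDiagram

theorem Finset.card_filter_snd_lt_and_fst_lt_le_mul (s : Finset (ℕ × ℕ)) (a b : ℕ) :
    #{c ∈ s | c.2 < a ∧ c.1 < b} ≤ a * b := by
  calc #{c ∈ s | c.2 < a ∧ c.1 < b}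
      ≤ #(range b ×ˢ range a) := card_le_card fun c hc => by
        simp only [mem_filter] at hc
        simp [hc.2.1, hc.2.2]
    _ = a * b := by rw [card_product, card_range, card_range, mul_comm]

/-- **Inequality (2) of the paper.** For a partition `μ` and nonnegative integers
`a`, `b`, the number of boxes in the first `a` columns of `μ` is at most `a * b`
plus the number of boxes of `μ` lying strictly below row `b`.  In 1-indexed notation:
`λ'₁ + ⋯ + λ'_a ≤ a·b + (λ_{b+1} + λ_{b+2} + ⋯)`. -/
theorem youngDiagram_first_cols_le_rect_add_lower_rows
    (μ : YoungDiagram) (a b : ℕ) :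
    ∑ j ∈ Finset.range a, μ.colLen j ≤
      a * b + ∑ i ∈ Finset.Ico b (μ.colLen 0), μ.rowLen i := by
  rw [μ.sum_colLen_eq_card_filter, μ.sum_rowLen_Ico_colLen_zero,
    ← card_filter_add_card_filter_not (s := {c ∈ μ.cells | c.2 ∈ range a})
      (fun c => c.1 < b),
    filter_filter, filter_filter]
  gcongr
  · simpa only [mem_range] using card_filter_snd_lt_and_fst_lt_le_mul μ.cells a b
  · exact fun h => not_lt.1 h.2
end

section
/- Let λ, μ, ν be partitions with λ ⊆ ν (that is, λ_i ≤ ν_i for all i), and suppose there exists a Littlewood–Richardson filling of the skew diagram ν/λ of content μ; i.e. an assignment T of a positive integer to each box of ν that is not a box of λ such that: entries weakly increase from left to right along each row of ν/λ; entries strictly increase from top to bottom down each column of ν/λ; exactly μ_i boxes carry the entry i; and the reverse reading word of T (reading entries right to left in each row, from top row to bottom row) is a lattice word, meaning every initial segment contains at least as many occurrences of i as of i+1 for every i ≥ 1. Then for every positive integer k, ν₁ + ν₂ + ⋯ + ν_k ≤ (λ₁ + λ₂ + ⋯ + λ_k) + (μ₁ + μ₂ + ⋯ + μ_k). -/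
/-!
In a lattice word every letter `k + 1` is preceded by a `k`; with rows weakly increasing, the `k`
preceding an entry `k + 1` of row `i` in the reverse reading word lies in an earlier row. Hence
every entry in row `i` is at most `i + 1`, so the boxes of `ν/λ` in the first `k` rows carry entries
in `1, …, k` and number at most `μ₁ + ⋯ + μ_k`, while they number at least `∑_{i<k} (ν_i - λ_i)`.
-/

open Finset

namespace YoungDiagram

theorem card_filter_fst_lt (μ : YoungDiagram) (k : ℕ) :
    #{x ∈ μ.cells | x.1 < k} = ∑ i ∈ range k, μ.rowLen i := by
  classical
  rw [card_eq_sum_card_fiberwise (f := Prod.fst) (t := range k) fun x hx => by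
    simpa using (mem_filter.mp hx).2]
  refine sum_congr rfl fun i hi => ?_
  rw [rowLen_eq_card, row, filter_filter]
  exact congrArg card <| filter_congr fun x _ => by grind

theorem sum_rowLen_le_add_card_sdiff (lam nu : YoungDiagram) (k : ℕ) :
    ∑ i ∈ range k, nu.rowLen i ≤
      ∑ i ∈ range k, lam.rowLen i + #{x ∈ nu.cells \ lam.cells | x.1 < k} := by
  classical
  rw [← card_filter_fst_lt, ← card_filter_fst_lt, add_comm]
  calc #{x ∈ nu.cells | x.1 < k}
      ≤ #({x ∈ nu.cells | x.1 < k} \ {x ∈ lam.cells | x.1 < k}) + #{x ∈ lam.cells | x.1 < k} :=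
        card_le_card_sdiff_add_card
    _ ≤ _ := by
        gcongr
        intro x
        simp only [mem_sdiff, mem_filter]
        tauto

end YoungDiagram

section Filling

variable {D : Finset (ℕ × ℕ)} {T : ℕ × ℕ → ℕ}

theorem exists_fst_lt_of_lattice
    (hrow : ∀ i j₁ j₂, (i, j₁) ∈ D → (i, j₂) ∈ D → j₁ ≤ j₂ → T (i, j₁) ≤ T (i, j₂))
    (hlattice : ∀ r c k, 1 ≤ k →
      #{x ∈ D | (x.1 < r ∨ (x.1 = r ∧ c ≤ x.2)) ∧ T x = k + 1} ≤
      #{x ∈ D | (x.1 < r ∨ (x.1 = r ∧ c ≤ x.2)) ∧ T x = k})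
    {x : ℕ × ℕ} (hx : x ∈ D) {k : ℕ} (hk : 1 ≤ k) (hTx : T x = k + 1) :
    ∃ y ∈ D, y.1 < x.1 ∧ T y = k := by
  obtain ⟨i, j⟩ := x
  have hprefix : 0 < #{y ∈ D | (y.1 < i ∨ (y.1 = i ∧ j ≤ y.2)) ∧ T y = k} :=
    (card_pos.mpr ⟨(i, j), by simp [hx, hTx]⟩).trans_le (hlattice i j k hk)
  obtain ⟨⟨i', j'⟩, hy⟩ := card_pos.mp hprefix
  simp only [mem_filter] at hy
  obtain ⟨hyD, hbefore | ⟨rfl, hjj'⟩, hTy⟩ := hy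
  · exact ⟨(i', j'), hyD, hbefore, hTy⟩
  · have := hrow i' j j' hx hyD hjj'
    omega

theorem le_fst_add_one_of_lattice
    (hrow : ∀ i j₁ j₂, (i, j₁) ∈ D → (i, j₂) ∈ D → j₁ ≤ j₂ → T (i, j₁) ≤ T (i, j₂))
    (hlattice : ∀ r c k, 1 ≤ k →
      #{x ∈ D | (x.1 < r ∨ (x.1 = r ∧ c ≤ x.2)) ∧ T x = k + 1} ≤
      #{x ∈ D | (x.1 < r ∨ (x.1 = r ∧ c ≤ x.2)) ∧ T x = k}) :
    ∀ x ∈ D, T x ≤ x.1 + 1 := by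
  intro x hx
  induction hi : x.1 using Nat.strong_induction_on generalizing x with
  | _ i ih =>
    rcases Nat.lt_or_ge (T x) 2 with hsmall | hlarge
    · omega
    · obtain ⟨y, hyD, hyx, hTy⟩ :=
        exists_fst_lt_of_lattice hrow hlattice hx (k := T x - 1) (by omega) (by omega)
      have := ih y.1 (hi ▸ hyx) y hyD rfl
      omega

theorem card_le_sum_of_content {μ : ℕ → ℕ}
    (hcontent : ∀ k, 1 ≤ k → #{x ∈ D | T x = k} = μ (k - 1))
    {S : Finset (ℕ × ℕ)} (hS : S ⊆ D) {k : ℕ} (hT : ∀ x ∈ S, 1 ≤ T x ∧ T x ≤ k) :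
    #S ≤ ∑ i ∈ range k, μ i := by
  classical
  rw [card_eq_sum_card_fiberwise (f := fun x => T x - 1) (t := range k) fun x hx => by
    have := hT x hx; simp only [coe_range, Set.mem_Iio]; omega]
  refine sum_le_sum fun i _ => ?_
  rw [show μ i = μ (i + 1 - 1) from rfl, ← hcontent (i + 1) (by omega)]
  refine card_le_card fun x hx => ?_
  have := hT x (mem_filter.mp hx).1
  simp only [mem_filter] at hx ⊢
  exact ⟨hS hx.1, by omega⟩

end Filling

theorem littlewoodRichardson_horn_inequality_general
    (lam mu nu : YoungDiagram)
    (T : ℕ × ℕ → ℕ)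
    (hpos : ∀ x ∈ nu.cells \ lam.cells, 1 ≤ T x)
    (hrow : ∀ i j₁ j₂, (i, j₁) ∈ nu.cells \ lam.cells → (i, j₂) ∈ nu.cells \ lam.cells →
      j₁ ≤ j₂ → T (i, j₁) ≤ T (i, j₂))
    (hcontent : ∀ k, 1 ≤ k →
      ((nu.cells \ lam.cells).filter (fun x => T x = k)).card = mu.rowLen (k - 1))
    (hlattice : ∀ r c k, 1 ≤ k →
      ((nu.cells \ lam.cells).filter
        (fun x => (x.1 < r ∨ (x.1 = r ∧ c ≤ x.2)) ∧ T x = k + 1)).card ≤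
      ((nu.cells \ lam.cells).filter
        (fun x => (x.1 < r ∨ (x.1 = r ∧ c ≤ x.2)) ∧ T x = k)).card)
    (k : ℕ) :
    ∑ i ∈ Finset.range k, nu.rowLen i ≤
      (∑ i ∈ Finset.range k, lam.rowLen i) + ∑ i ∈ Finset.range k, mu.rowLen i := by
  calc ∑ i ∈ range k, nu.rowLen i
      ≤ ∑ i ∈ range k, lam.rowLen i + #{x ∈ nu.cells \ lam.cells | x.1 < k} :=
        YoungDiagram.sum_rowLen_le_add_card_sdiff lam nu k
    _ ≤ _ := by
        gcongr
        refine card_le_sum_of_content hcontent (filter_subset _ _) fun x hx => ?_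
        obtain ⟨hxD, hxk⟩ := mem_filter.mp hx
        have := le_fst_add_one_of_lattice hrow hlattice x hxD
        exact ⟨hpos x hxD, by omega⟩

/-- **Lemma 3.2 (Horn-type inequality via the Littlewood–Richardson rule).**
Let `lam ⊆ nu` be partitions (`lam_i ≤ nu_i` for all `i`) and suppose `T` is a
Littlewood–Richardson filling of the skew diagram `nu / lam` of content `mu`:
positive entries, rows weakly increasing, columns strictly increasing, exactly
`mu_k` entries equal to `k` for each `k ≥ 1`, and the reverse reading word (right
to left in each row, top to bottom) is a lattice word, i.e. every initial segment
contains at least as many `k`'s as `(k+1)`'s.  Then for every `k ≥ 1`,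
`nu₁ + ⋯ + nu_k ≤ (lam₁ + ⋯ + lam_k) + (mu₁ + ⋯ + mu_k)`. -/
theorem littlewoodRichardson_horn_inequality
    (lam mu nu : YoungDiagram)
    (hsub : ∀ i, lam.rowLen i ≤ nu.rowLen i)
    (T : ℕ × ℕ → ℕ)
    (hpos : ∀ x ∈ nu.cells \ lam.cells, 1 ≤ T x)
    (hrow : ∀ i j₁ j₂, (i, j₁) ∈ nu.cells \ lam.cells → (i, j₂) ∈ nu.cells \ lam.cells →
      j₁ ≤ j₂ → T (i, j₁) ≤ T (i, j₂))
    (hcol : ∀ i₁ i₂ j, (i₁, j) ∈ nu.cells \ lam.cells → (i₂, j) ∈ nu.cells \ lam.cells →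
      i₁ < i₂ → T (i₁, j) < T (i₂, j))
    (hcontent : ∀ k, 1 ≤ k →
      ((nu.cells \ lam.cells).filter (fun x => T x = k)).card = mu.rowLen (k - 1))
    (hlattice : ∀ r c k, 1 ≤ k →
      ((nu.cells \ lam.cells).filter
        (fun x => (x.1 < r ∨ (x.1 = r ∧ c ≤ x.2)) ∧ T x = k + 1)).card ≤
      ((nu.cells \ lam.cells).filter
        (fun x => (x.1 < r ∨ (x.1 = r ∧ c ≤ x.2)) ∧ T x = k)).card)
    (k : ℕ) (hk : 1 ≤ k) :
    ∑ i ∈ Finset.range k, nu.rowLen i ≤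
      (∑ i ∈ Finset.range k, lam.rowLen i) + ∑ i ∈ Finset.range k, mu.rowLen i :=
  littlewoodRichardson_horn_inequality_general lam mu nu T hpos hrow hcontent hlattice k
end

section
/- Let Q = (Q₀, Q₁) be a finite quiver in which every vertex is either a source or a sink. Assign to every arrow a ∈ Q₁ a partition λ(a), to every source x a nonnegative integer γ_x, and to every sink y a nonnegative integer β_y. Suppose that for every source x there is a partition ν_x with ν_{x,1} + ⋯ + ν_{x,r} ≤ Σ_{a : ta = x} (λ(a)₁ + ⋯ + λ(a)_r) for all r ≥ 1, and for every sink y there is a partition μ_y with μ_{y,1} + ⋯ + μ_{y,r} ≤ Σ_{a : ha = y} (λ(a)'₁ + ⋯ + λ(a)'_r) for all r ≥ 1. Define u_x to be the largest nonnegative integer u with ν_{x,u} ≥ γ_x + u for each source x, and u_y the largest nonnegative integer u with μ_{y,u} ≥ β_y + u for each sink y (taking u = 0 when no such positive integer exists), and set N = Σ_{sources x} γ_x·u_x + Σ_{sinks y} β_y·u_y. Then Σ_{a ∈ Q₁} |λ(a)| − N ≥ Σ_{x ∈ Q₀} u_x² − Σ_{a ∈ Q₁} u_{ta}·u_{ha}.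 -/
/-!
At a source `x`, the defining property of `u x` says that `ν x` contains the
`u x × (γ x + u x)` rectangle, so `u x (γ x + u x)` is at most the sum of the
first `u x` parts of `ν x`, hence at most the sum of the first `u x` rows of the `λ(a)`
leaving `x`; dually at the sinks with columns. Summing over vertices regroups these bounds
arrow by arrow, and for a single diagram `λ` the first `p` rows and first `q` columns
together cover at most `|λ|` cells, up to the `p × q` corner they share twice:
`∑_{i<p} λ_i + ∑_{j<q} λ'_j ≤ |λ| + p q`. Adding up gives the Euler form bound.
-/

open Finset

namespace YoungDiagram

theorem sum_range_rowLen_eq_card_filter (μ : YoungDiagram) (p : ℕ) :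
    ∑ i ∈ range p, μ.rowLen i = #{c ∈ μ.cells | c.1 < p} := by
  rw [card_eq_sum_card_fiberwise (f := Prod.fst) (t := range p)
    fun c hc => by simpa using (mem_filter.1 hc).2]
  refine sum_congr rfl fun i hi => ?_
  rw [rowLen_eq_card, row, filter_filter]
  exact congrArg card (filter_congr fun c _ => by simp at hi; omega)

theorem sum_range_colLen_eq_card_filter (μ : YoungDiagram) (q : ℕ) :
    ∑ j ∈ range q, μ.colLen j = #{c ∈ μ.cells | c.2 < q} := by
  rw [card_eq_sum_card_fiberwise (f := Prod.snd) (t := range q)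
    fun c hc => by simpa using (mem_filter.1 hc).2]
  refine sum_congr rfl fun j hj => ?_
  rw [colLen_eq_card, col, filter_filter]
  exact congrArg card (filter_congr fun c _ => by simp at hj; omega)

theorem sum_range_rowLen_add_sum_range_colLen_le (μ : YoungDiagram) (p q : ℕ) :
    ∑ i ∈ range p, μ.rowLen i + ∑ j ∈ range q, μ.colLen j ≤ μ.card + p * q := by
  rw [sum_range_rowLen_eq_card_filter, sum_range_colLen_eq_card_filter,
    ← card_union_add_card_inter]
  calc _ ≤ μ.card + #(range p ×ˢ range q) :=
        add_le_add (card_le_card (union_subset (filter_subset _ _) (filter_subset _ _)))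
          (card_le_card fun c hc => by simp only [mem_inter, mem_filter] at hc; simp [hc])
    _ = μ.card + p * q := by simp

theorem mul_le_sum_range_rowLen (μ : YoungDiagram) {m v : ℕ} (hm : m ≤ μ.rowLen (v - 1)) :
    v * m ≤ ∑ i ∈ range v, μ.rowLen i := by
  simpa using card_nsmul_le_sum (range v) μ.rowLen m
    fun i hi => hm.trans (μ.rowLen_anti _ _ (by simp at hi; omega))

theorem mul_add_self_le_of_sum_range_rowLen_le (ν : YoungDiagram) {s : ℕ → ℕ} {g u : ℕ}
    (hν : ∀ r, 1 ≤ r → ∑ i ∈ range r, ν.rowLen i ≤ s r)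
    (hu : u = 0 ∨ g + u ≤ ν.rowLen (u - 1)) :
    u * (g + u) ≤ s u := by
  rcases Nat.eq_zero_or_pos u with rfl | hpos
  · simp
  · exact (ν.mul_le_sum_range_rowLen (hu.resolve_left hpos.ne')).trans (hν u hpos)

end YoungDiagram

theorem Finset.sum_le_sum_of_le_sum_fiberwise {ι κ M : Type*} [DecidableEq κ] [AddCommMonoid M]
    [PartialOrder M] [IsOrderedAddMonoid M] {s : Finset ι} {t : Finset κ} {g : ι → κ}
    (hg : ∀ i ∈ s, g i ∈ t) {w : κ → M} {F : ι → κ → M}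
    (hw : ∀ k ∈ t, w k ≤ ∑ i ∈ s with g i = k, F i k) :
    ∑ k ∈ t, w k ≤ ∑ i ∈ s, F i (g i) :=
  calc ∑ k ∈ t, w k ≤ ∑ k ∈ t, ∑ i ∈ s with g i = k, F i k := sum_le_sum hw
    _ = ∑ k ∈ t, ∑ i ∈ s with g i = k, F i (g i) :=
        sum_congr rfl fun _ _ => sum_congr rfl fun _ hi => by rw [(mem_filter.1 hi).2]
    _ = ∑ i ∈ s, F i (g i) := sum_fiberwise_of_maps_to hg _

/-- **Theorem 3.3 of the paper (combinatorial form).**  Let `Q` be a finite quiver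
(vertices `V`, arrows `A`, tail `t`, head `h`) in which every vertex is a source
(no incoming arrows) or a sink (no outgoing arrows).  Assign a partition `lam a`
to every arrow, a nonnegative integer `γ x` to every source and `β y` to every
sink.  Suppose for every source `x` there is a partition `ν x` whose partial sums
are dominated by the corresponding sums of row lengths of the partitions on the
arrows leaving `x`, and for every sink `y` a partition `μ y` whose partial sums
are dominated by the sums of column lengths (conjugate parts) of the partitions
on the arrows entering `y`.  Let `u x` be the largest nonnegative integer `u`
with `ν x_u ≥ γ x + u` at sources (resp. `μ y_u ≥ β y + u` at sinks), taken `0`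
when no positive such integer exists, and set
`N = Σ_{sources x} γ x · u x + Σ_{sinks y} β y · u y`.  Then
`Σ_a |lam a| − N ≥ Σ_x (u x)² − Σ_a u (t a) · u (h a)` (the Euler form of `Q` at `u`). -/
theorem quiver_resolution_degree_inequality
    {V A : Type*} [Fintype V] [Fintype A] [DecidableEq V]
    (t h : A → V)
    (hsrcsink : ∀ v : V, (∀ a : A, h a ≠ v) ∨ (∀ a : A, t a ≠ v))
    (lam : A → YoungDiagram) (γ β : V → ℕ) (ν μ : V → YoungDiagram) (u : V → ℕ)
    (hν : ∀ x : V, (∀ a : A, h a ≠ x) → ∀ r, 1 ≤ r →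
      ∑ i ∈ Finset.range r, (ν x).rowLen i ≤
        ∑ a ∈ univ.filter (fun a => t a = x), ∑ i ∈ Finset.range r, (lam a).rowLen i)
    (hμ : ∀ y : V, (∀ a : A, t a ≠ y) → ∀ r, 1 ≤ r →
      ∑ i ∈ Finset.range r, (μ y).rowLen i ≤
        ∑ a ∈ univ.filter (fun a => h a = y), ∑ i ∈ Finset.range r, (lam a).colLen i)
    (huSource : ∀ x : V, (∀ a : A, h a ≠ x) →
      (u x = 0 ∨ γ x + u x ≤ (ν x).rowLen (u x - 1)) ∧
        ∀ v, u x < v → (ν x).rowLen (v - 1) < γ x + v)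
    (huSink : ∀ y : V, (∀ a : A, t a ≠ y) →
      (u y = 0 ∨ β y + u y ≤ (μ y).rowLen (u y - 1)) ∧
        ∀ v, u y < v → (μ y).rowLen (v - 1) < β y + v) :
    (∑ x : V, (u x : ℤ) ^ 2) - ∑ a : A, (u (t a) : ℤ) * (u (h a) : ℤ) ≤
      (∑ a : A, ((lam a).card : ℤ)) -
        ((∑ x ∈ univ.filter (fun x : V => ∀ a : A, h a ≠ x), (γ x : ℤ) * (u x : ℤ)) +
         (∑ y ∈ univ.filter (fun y : V => ∀ a : A, t a ≠ y), (β y : ℤ) * (u y : ℤ))) := by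
  set S := univ.filter (fun x : V => ∀ a : A, h a ≠ x)
  set T := univ.filter (fun y : V => ∀ a : A, t a ≠ y)
  have htail : ∀ a ∈ univ, t a ∈ S := fun a _ => by
    simpa [S] using (hsrcsink (t a)).resolve_right fun hsink => hsink a rfl
  have hhead : ∀ a ∈ univ, h a ∈ T := fun a _ => by
    simpa [T] using (hsrcsink (h a)).resolve_left fun hsource => hsource a rfl
  have hsources : ∑ x ∈ S, u x * (γ x + u x) ≤ ∑ a, ∑ i ∈ range (u (t a)), (lam a).rowLen i :=
    sum_le_sum_of_le_sum_fiberwise htail fun x hx =>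
      have hx : ∀ a, h a ≠ x := (mem_filter_univ x).1 hx
      (ν x).mul_add_self_le_of_sum_range_rowLen_le (hν x hx) (huSource x hx).1
  have hsinks : ∑ y ∈ T, u y * (β y + u y) ≤ ∑ a, ∑ j ∈ range (u (h a)), (lam a).colLen j :=
    sum_le_sum_of_le_sum_fiberwise hhead fun y hy =>
      have hy : ∀ a, t a ≠ y := (mem_filter_univ y).1 hy
      (μ y).mul_add_self_le_of_sum_range_rowLen_le (hμ y hy) (huSink y hy).1
  have harrows := sum_le_sum fun a (_ : a ∈ univ) =>
    (lam a).sum_range_rowLen_add_sum_range_colLen_le (u (t a)) (u (h a))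
  have hsquares : ∑ x, u x ^ 2 ≤ ∑ x ∈ S, u x ^ 2 + ∑ y ∈ T, u y ^ 2 := by
    rw [← sum_union_inter]
    exact le_add_right (sum_le_sum_of_subset fun x _ => by simpa [S, T] using hsrcsink x)
  have hexpand : ∀ x, u x * (γ x + u x) = γ x * u x + u x ^ 2 ∧
      u x * (β x + u x) = β x * u x + u x ^ 2 := fun x => by constructor <;> ring
  simp only [hexpand, sum_add_distrib] at hsources hsinks harrows
  zify at hsources hsinks harrows hsquares
  linarith
end
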